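/- (Decomposition Theorem, vanishing-entries form.) Let 0 ≤ k ≤ t, let y ∈ Las_t(K), and let S ⊆ [n] be such that y_I = 0 for every index set I (with |I| ≤ 2t+2) satisfying |I ∩ S| > k. Then there exist finitely many vectors w^{(1)}, …, w^{(N)} ∈ Las_{t−k}(K) with w^{(j)}_{\{i\}} ∈ {0,1} for all i ∈ S and all j, and coefficients λ_1, …, λ_N ≥ 0 with Σ_j λ_j = 1, such that y_J = Σ_j λ_j · w^{(j)}_J for every J with |J| ≤ 2(t−k)+2. -/

import Mathlib

/-!
For `T ⊆ S`, localize `y` at the atom `{x | x_S = 𝟙_T}`, i.e. multiply it by the multilinear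
polynomial `p_T = ∏_{i ∈ T} x_i ∏_{i ∈ S \ T} (1 - x_i)`. Since `∑_T p_T = 1`, the localizations
sum to `y`. Modulo `x_i² = x_i` we have `p_T² = p_T`, and by the vanishing hypothesis only the
monomials of `p_T` of degree `≤ k` contribute, so the level-`(t - k)` moment matrix of the
localization is a congruence `Pᴴ M P` of the level-`t` moment matrix of `y`, hence PSD; the same
holds for the shifted matrices because localization commutes with the shift. Dividing each
localization by its `∅`-entry gives a level-`(t - k)` point that is integral on `S`, and the
`∅`-entries are the convex weights. A localization with vanishing `∅`-entry vanishes on every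
entry of size `≤ 2(t - k) + 2` and can be dropped.
-/

open Finset

/-- Membership in the polyhedron `K = {x : A x ≥ b}`. -/
def memK {n m : ℕ} (A : Matrix (Fin m) (Fin n) ℝ) (b : Fin m → ℝ) (x : Fin n → ℝ) : Prop :=
  ∀ ℓ : Fin m, b ℓ ≤ ∑ i, A ℓ i * x i

/-- The moment matrix of a vector `y` indexed by subsets, truncated at sets of size `≤ t`. -/
def momentMatrix {α : Type*} [Fintype α] [DecidableEq α] (y : Finset α → ℝ) (t : ℕ) :
    Matrix {I : Finset α // I.card ≤ t} {I : Finset α // I.card ≤ t} ℝ :=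
  fun I J => y (I.1 ∪ J.1)

/-- The shift operator `(a;β) * y` for a linear constraint `aᵀx ≥ β`. -/
def shiftVec {α ι : Type*} [Fintype α] [DecidableEq α]
    (A : ι → α → ℝ) (b : ι → ℝ) (ℓ : ι) (y : Finset α → ℝ) : Finset α → ℝ :=
  fun I => (∑ i, A ℓ i * y (insert i I)) - b ℓ * y I

/-- `y ∈ Las_t(K)` where `K = {x : A x ≥ b}`: `y_∅ = 1`, the moment matrix truncated at
sets of size `≤ t+1` is PSD, and each shifted moment matrix truncated at sets of size
`≤ t` is PSD. -/
def IsLasserre {α ι : Type*} [Fintype α] [DecidableEq α]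
    (A : ι → α → ℝ) (b : ι → ℝ) (t : ℕ) (y : Finset α → ℝ) : Prop :=
  y ∅ = 1 ∧ (momentMatrix y (t + 1)).PosSemidef ∧
    ∀ ℓ : ι, (momentMatrix (shiftVec A b ℓ y) t).PosSemidef

namespace Finset

variable {α β : Type*} [DecidableEq α] [CommRing β]

theorem sum_powerset_sum_powerset_sdiff_neg_one_pow_mul (S : Finset α) (g : Finset α → β) :
    ∑ T ∈ S.powerset, ∑ U ∈ (S \ T).powerset, (-1 : β) ^ U.card * g (T ∪ U) = g ∅ := by
  induction S using Finset.induction_on generalizing g with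
  | empty => simp
  | insert a S ha ih =>
    rw [sum_powerset_insert ha, ← ih g, ← sum_add_distrib]
    refine sum_congr rfl fun T hT => ?_
    have haT : a ∉ T := notMem_of_mem_powerset_of_notMem hT ha
    have haST : a ∉ S \ T := fun h => ha (mem_sdiff.1 h).1
    rw [insert_sdiff_of_notMem _ haT, insert_sdiff_insert, sdiff_insert_of_notMem ha,
      sum_powerset_insert haST, add_assoc, ← sum_add_distrib]
    refine add_eq_left.2 (sum_eq_zero fun U hU => ?_)
    rw [card_insert_of_notMem (notMem_of_mem_powerset_of_notMem hU haST), union_insert,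
      insert_union, pow_succ]
    ring

/-- The multilinear polynomial `∏_{i ∈ V} (1 - x_i)` is idempotent modulo `x_i² = x_i`. -/
theorem sum_powerset_sum_powerset_neg_one_pow_mul_union (V : Finset α) (g : Finset α → β) :
    ∑ R ∈ V.powerset, ∑ R' ∈ V.powerset, (-1 : β) ^ (R.card + R'.card) * g (R ∪ R') =
      ∑ U ∈ V.powerset, (-1 : β) ^ U.card * g U := by
  induction V using Finset.induction_on generalizing g with
  | empty => simp
  | insert a V ha ih =>
    have expand : ∀ R ∈ V.powerset, ∀ R' ∈ V.powerset,
        (-1 : β) ^ (R.card + R'.card) * g (R ∪ R') +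
          (-1 : β) ^ (R.card + (insert a R').card) * g (R ∪ insert a R') +
          ((-1 : β) ^ ((insert a R).card + R'.card) * g (insert a R ∪ R') +
          (-1 : β) ^ ((insert a R).card + (insert a R').card) * g (insert a R ∪ insert a R')) =
        (-1 : β) ^ (R.card + R'.card) * g (R ∪ R') +
          -((-1 : β) ^ (R.card + R'.card) * g (insert a (R ∪ R'))) := by
      intro R hR R' hR'
      rw [card_insert_of_notMem (notMem_of_mem_powerset_of_notMem hR ha),
        card_insert_of_notMem (notMem_of_mem_powerset_of_notMem hR' ha), union_insert,
        insert_union, insert_union, union_insert, insert_idem]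
      ring
    simp only [sum_powerset_insert ha, ← sum_add_distrib]
    rw [sum_congr rfl fun R hR => sum_congr rfl fun R' hR' => expand R hR R' hR']
    simp only [sum_add_distrib, sum_neg_distrib]
    rw [ih g, ih (fun U => g (insert a U)), ← sum_neg_distrib]
    congr 1
    refine sum_congr rfl fun U hU => ?_
    rw [card_insert_of_notMem (notMem_of_mem_powerset_of_notMem hU ha), pow_succ]
    ring

theorem add_card_le_card_inter {T U W S : Finset α} (hTS : T ⊆ S) (hU : U ⊆ S \ T)
    (hW : T ∪ U ⊆ W) : T.card + U.card ≤ (W ∩ S).card := by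
  rw [← card_union_of_disjoint (disjoint_of_subset_right hU disjoint_sdiff)]
  exact card_le_card (subset_inter hW (union_subset hTS (hU.trans sdiff_subset)))

end Finset

namespace Matrix

open scoped ComplexOrder

theorem PosSemidef.apply_eq_zero_of_diag_eq_zero {n 𝕜 : Type*} [Fintype n] [RCLike 𝕜]
    {M : Matrix n n 𝕜} (hM : M.PosSemidef) {i : n} (hi : M i i = 0) (j : n) : M i j = 0 := by
  classical
  have hquad : star (Pi.single i 1) ⬝ᵥ M *ᵥ Pi.single i 1 = 0 := by
    simpa [Matrix.mulVec_single, dotProduct_single] using hi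
  have hji : M j i = 0 := by
    simpa [Matrix.mulVec_single] using congrFun ((hM.dotProduct_mulVec_zero_iff _).1 hquad) j
  rw [← hM.1.apply i j, hji, star_zero]

end Matrix

section AtomVec

variable {α : Type*} [DecidableEq α]

/-- The moments of `y` times `∏_{i ∈ T} x_i ∏_{i ∈ S \ T} (1 - x_i)`, the indicator of the
atom `{x | ∀ i ∈ S, x_i = 1 ↔ i ∈ T}`. -/
def atomVec (S T : Finset α) (y : Finset α → ℝ) : Finset α → ℝ :=
  fun I => ∑ U ∈ (S \ T).powerset, (-1 : ℝ) ^ U.card * y (I ∪ T ∪ U)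

theorem sum_atomVec (S : Finset α) (y : Finset α → ℝ) (I : Finset α) :
    ∑ T ∈ S.powerset, atomVec S T y I = y I := by
  simpa [atomVec, union_assoc] using
    sum_powerset_sum_powerset_sdiff_neg_one_pow_mul S (fun W => y (I ∪ W))

theorem atomVec_eq_zero {S T : Finset α} {k : ℕ} {y : Finset α → ℝ}
    (hy : ∀ W, k < (W ∩ S).card → y W = 0) (hTS : T ⊆ S) (hTk : k < T.card) :
    atomVec S T y = 0 := by
  funext I
  refine sum_eq_zero fun U hU => ?_
  rw [hy _ (hTk.trans_le ?_), mul_zero]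
  exact (Nat.le_add_right _ _).trans (add_card_le_card_inter hTS (mem_powerset.1 hU)
    (union_subset_union subset_union_right subset_rfl))

theorem atomVec_singleton (S T : Finset α) (y : Finset α → ℝ) {i : α} (hi : i ∈ S) :
    atomVec S T y {i} = if i ∈ T then atomVec S T y ∅ else 0 := by
  split_ifs with hiT
  · refine sum_congr rfl fun U _ => ?_
    rw [empty_union, union_eq_right.2 (singleton_subset_iff.2 hiT)]
  · have hi' : i ∈ S \ T := mem_sdiff.2 ⟨hi, hiT⟩
    have hni : i ∉ (S \ T).erase i := notMem_erase _ _
    rw [atomVec, ← insert_erase hi', sum_powerset_insert hni, ← sum_add_distrib]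
    refine sum_eq_zero fun U hU => ?_
    have hiU : i ∉ U := notMem_of_mem_powerset_of_notMem hU hni
    rw [card_insert_of_notMem hiU, union_insert, insert_eq_of_mem (by simp), pow_succ]
    ring

end AtomVec

section Lasserre

variable {α ι : Type*} [Fintype α] [DecidableEq α]

/-- The moments of `p² f` for `p = ∑ u ∈ 𝓤, c u • x^(σ u)` form the congruence `Pᴴ M P` of the
moment matrix `M` of `f`. -/
theorem posSemidef_momentMatrix_sum_mul_sum {κ : Type*} (𝓤 : Finset κ) (σ : κ → Finset α)
    (c : κ → ℝ) {f : Finset α → ℝ} {d e : ℕ} (hσ : ∀ u ∈ 𝓤, (σ u).card + d ≤ e)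
    (hf : (momentMatrix f e).PosSemidef) :
    (momentMatrix (fun X => ∑ u ∈ 𝓤, ∑ v ∈ 𝓤, c u * c v * f (X ∪ σ u ∪ σ v)) d).PosSemidef := by
  have hcard : ∀ u ∈ 𝓤, ∀ I : {I : Finset α // I.card ≤ d}, (I.1 ∪ σ u).card ≤ e :=
    fun u hu I => (card_union_le _ _).trans (by have := hσ u hu; have := I.2; omega)
  let P : Matrix {I : Finset α // I.card ≤ e} {I : Finset α // I.card ≤ d} ℝ :=
    fun I' I => ∑ u ∈ 𝓤, if I'.1 = I.1 ∪ σ u then c u else 0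
  have sum_P_mul : ∀ I (h : {I : Finset α // I.card ≤ e} → ℝ),
      ∑ I', P I' I * h I' = ∑ u ∈ 𝓤.attach, c u * h ⟨I.1 ∪ σ u, hcard u u.2 I⟩ := by
    intro I h
    simp only [P, sum_mul, ← sum_attach 𝓤]
    rw [sum_comm]
    refine sum_congr rfl fun u _ => ?_
    have : ∀ I' : {I : Finset α // I.card ≤ e},
        (I'.1 = I.1 ∪ σ u) ↔ (I' = ⟨I.1 ∪ σ u, hcard u u.2 I⟩) := fun I' => by rw [Subtype.ext_iff]
    simp only [this, ite_mul, zero_mul, sum_ite_eq', mem_univ, if_true]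
  convert hf.conjTranspose_mul_mul_same P using 1
  ext I J
  simp only [Matrix.mul_apply, Matrix.conjTranspose_apply, star_trivial]
  simp_rw [mul_comm _ (P _ J), sum_P_mul J, sum_P_mul I, mul_sum]
  rw [sum_comm]
  simp only [momentMatrix]
  rw [← sum_attach 𝓤]
  refine sum_congr rfl fun u _ => ?_
  rw [← sum_attach 𝓤]
  refine sum_congr rfl fun v _ => ?_
  rw [show I.1 ∪ J.1 ∪ σ u ∪ σ v = I.1 ∪ σ u ∪ (J.1 ∪ σ v) by ac_rfl]
  ring

theorem posSemidef_momentMatrix_atomVec {S T : Finset α} {k d : ℕ} {y : Finset α → ℝ}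
    (hy : ∀ W, k < (W ∩ S).card → y W = 0) (hTS : T ⊆ S) (hTk : T.card ≤ k)
    (hM : (momentMatrix y (d + k)).PosSemidef) :
    (momentMatrix (atomVec S T y) d).PosSemidef := by
  set 𝓤 := (S \ T).powerset.filter (·.card ≤ k - T.card)
  have hvan : ∀ X U U', U ∈ (S \ T).powerset → k - T.card < U.card →
      y (X ∪ T ∪ (U ∪ U')) = 0 := fun X U U' hU hUk => by
    refine hy _ (lt_of_lt_of_le (by omega) (add_card_le_card_inter hTS (mem_powerset.1 hU) ?_))
    intro x
    simp only [mem_union]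
    tauto
  have hatom : atomVec S T y = fun X => ∑ U ∈ 𝓤, ∑ U' ∈ 𝓤,
      (-1 : ℝ) ^ U.card * (-1 : ℝ) ^ U'.card * y (X ∪ (T ∪ U) ∪ (T ∪ U')) := by
    funext X
    have hset : ∀ U U', X ∪ (T ∪ U) ∪ (T ∪ U') = X ∪ T ∪ (U ∪ U') := fun U U' => by
      ext x
      simp only [mem_union]
      tauto
    simp only [hset, ← pow_add]
    rw [atomVec, ← sum_powerset_sum_powerset_neg_one_pow_mul_union (S \ T) (fun W => y (X ∪ T ∪ W)),
      sum_filter_of_ne fun U hU hne => ?_]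
    · refine sum_congr rfl fun U _ => (sum_filter_of_ne fun U' hU' hne => ?_).symm
      by_contra hU'k
      rw [union_comm U, hvan X U' U hU' (not_le.1 hU'k), mul_zero] at hne
      exact hne rfl
    · by_contra hUk
      exact hne (sum_eq_zero fun U' _ => by rw [hvan X U U' hU (not_le.1 hUk), mul_zero])
  rw [hatom]
  refine posSemidef_momentMatrix_sum_mul_sum 𝓤 (T ∪ ·) _ (fun U hU => ?_) hM
  have := (mem_filter.1 hU).2
  have := card_union_le T U
  omega

theorem apply_eq_zero_of_posSemidef_momentMatrix {z : Finset α → ℝ} {d : ℕ}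
    (hM : (momentMatrix z d).PosSemidef) (h0 : z ∅ = 0) {J : Finset α} (hJ : J.card ≤ 2 * d) :
    z J = 0 := by
  have hsmall : ∀ I : Finset α, I.card ≤ d → z I = 0 := fun I hI => by
    simpa [momentMatrix] using
      hM.apply_eq_zero_of_diag_eq_zero (i := ⟨∅, by simp⟩) (by simpa [momentMatrix]) ⟨I, hI⟩
  obtain ⟨J₁, hJ₁J, hJ₁⟩ := exists_subset_card_eq (min_le_right d J.card)
  have hJ₁d : J₁.card ≤ d := hJ₁ ▸ min_le_left _ _
  have hJ₂d : (J \ J₁).card ≤ d := by rw [card_sdiff_of_subset hJ₁J]; omega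
  simpa [momentMatrix, union_sdiff_of_subset hJ₁J] using
    hM.apply_eq_zero_of_diag_eq_zero (i := ⟨J₁, hJ₁d⟩) (by simpa [momentMatrix] using hsmall _ hJ₁d)
      ⟨J \ J₁, hJ₂d⟩

theorem momentMatrix_congr {y y' : Finset α → ℝ} {t : ℕ}
    (h : ∀ I : Finset α, I.card ≤ 2 * t → y' I = y I) : momentMatrix y' t = momentMatrix y t := by
  ext I J
  exact h _ ((card_union_le _ _).trans (by have := I.2; have := J.2; omega))

variable (A : ι → α → ℝ) (b : ι → ℝ) (ℓ : ι)

theorem shiftVec_congr {y y' : Finset α → ℝ} {n : ℕ}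
    (h : ∀ I : Finset α, I.card ≤ n + 1 → y' I = y I) {I : Finset α} (hI : I.card ≤ n) :
    shiftVec A b ℓ y' I = shiftVec A b ℓ y I := by
  simp only [shiftVec, h I (by omega),
    h (insert _ I) ((card_insert_le _ _).trans (Nat.succ_le_succ hI))]

theorem shiftVec_smul (c : ℝ) (z : Finset α → ℝ) :
    shiftVec A b ℓ (c • z) = c • shiftVec A b ℓ z := by
  funext I
  simp only [shiftVec, Pi.smul_apply, smul_eq_mul, mul_sub, mul_sum, mul_left_comm c]

theorem shiftVec_atomVec (S T : Finset α) (y : Finset α → ℝ) :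
    shiftVec A b ℓ (atomVec S T y) = atomVec S T (shiftVec A b ℓ y) := by
  funext I
  simp only [shiftVec, atomVec, mul_sub, mul_sum, sum_sub_distrib, insert_union]
  rw [sum_comm]
  congr 1 <;> refine sum_congr rfl fun _ _ => ?_
  · refine sum_congr rfl fun _ _ => ?_
    ring
  · ring

theorem shiftVec_apply_eq_zero {S : Finset α} {k : ℕ} {y : Finset α → ℝ}
    (hy : ∀ W, k < (W ∩ S).card → y W = 0) {W : Finset α} (hW : k < (W ∩ S).card) :
    shiftVec A b ℓ y W = 0 := by
  have hins : ∀ i, y (insert i W) = 0 := fun i =>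
    hy _ (hW.trans_le (card_le_card (inter_subset_inter (subset_insert _ _) subset_rfl)))
  simp [shiftVec, hins, hy W hW]

def IsLasserreCone (t : ℕ) (z : Finset α → ℝ) : Prop :=
  (momentMatrix z (t + 1)).PosSemidef ∧ ∀ ℓ, (momentMatrix (shiftVec A b ℓ z) t).PosSemidef

variable {A b} {t : ℕ} {z : Finset α → ℝ}

theorem IsLasserre.congr {y y' : Finset α → ℝ} (hy : IsLasserre A b t y)
    (h : ∀ I : Finset α, I.card ≤ 2 * t + 2 → y' I = y I) : IsLasserre A b t y' := by
  obtain ⟨hy₀, hM, hshift⟩ := hy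
  refine ⟨h ∅ (by simp) ▸ hy₀, ?_, fun ℓ => ?_⟩
  · rw [momentMatrix_congr fun I hI => h I (by omega)]
    exact hM
  · rw [momentMatrix_congr fun I hI => shiftVec_congr A b ℓ (fun J hJ => h J (by omega)) hI]
    exact hshift ℓ

theorem isLasserreCone_zero : IsLasserreCone A b t 0 := by
  have hshift : ∀ ℓ, shiftVec A b ℓ (0 : Finset α → ℝ) = 0 := fun ℓ => by
    simpa using shiftVec_smul A b ℓ 0 0
  refine ⟨Matrix.PosSemidef.zero, fun ℓ => ?_⟩
  rw [hshift]
  exact Matrix.PosSemidef.zero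

theorem IsLasserreCone.smul (h : IsLasserreCone A b t z) {c : ℝ} (hc : 0 ≤ c) :
    IsLasserreCone A b t (c • z) :=
  ⟨h.1.smul hc, fun ℓ => shiftVec_smul A b ℓ c z ▸ (h.2 ℓ).smul hc⟩

theorem IsLasserreCone.isLasserre_inv_smul (h : IsLasserreCone A b t z) (hz : 0 < z ∅) :
    IsLasserre A b t ((z ∅)⁻¹ • z) :=
  ⟨by simp [hz.ne'], h.smul (inv_nonneg.2 hz.le)⟩

theorem IsLasserreCone.apply_empty_nonneg (h : IsLasserreCone A b t z) : 0 ≤ z ∅ := by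
  simpa [momentMatrix] using h.1.diag_nonneg (i := ⟨∅, by simp⟩)

theorem IsLasserreCone.apply_eq_zero (h : IsLasserreCone A b t z) (h₀ : z ∅ = 0)
    {J : Finset α} (hJ : J.card ≤ 2 * t + 2) : z J = 0 :=
  apply_eq_zero_of_posSemidef_momentMatrix h.1 h₀ (by omega)

theorem IsLasserreCone.atomVec {S T : Finset α} {k : ℕ} {y : Finset α → ℝ}
    (h : IsLasserreCone A b (t + k) y) (hy : ∀ W, k < (W ∩ S).card → y W = 0) (hTS : T ⊆ S) :
    IsLasserreCone A b t (atomVec S T y) := by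
  obtain hTk | hTk := le_or_gt T.card k
  · refine ⟨posSemidef_momentMatrix_atomVec hy hTS hTk (by rw [add_right_comm]; exact h.1),
      fun ℓ => ?_⟩
    rw [shiftVec_atomVec]
    exact posSemidef_momentMatrix_atomVec (fun _ => shiftVec_apply_eq_zero A b ℓ hy) hTS hTk (h.2 ℓ)
  · rw [atomVec_eq_zero hy hTS hTk]
    exact isLasserreCone_zero

end Lasserre

theorem exists_fin_sum_eq_sum_inv_smul {β X : Type*} (𝒯 : Finset β) (z : β → X → ℝ)
    (m : β → ℝ) (P : (X → ℝ) → Prop) (hz : ∀ T ∈ 𝒯, 0 < m T ∧ P ((m T)⁻¹ • z T)) :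
    ∃ (N : ℕ) (lam : Fin N → ℝ) (w : Fin N → X → ℝ), (∀ j, P (w j)) ∧ (∀ j, 0 ≤ lam j) ∧
      ∀ x, ∑ j, lam j * w j x = ∑ T ∈ 𝒯, z T x := by
  let e := 𝒯.equivFin.symm
  refine ⟨𝒯.card, fun j => m (e j), fun j => (m (e j))⁻¹ • z (e j), fun j => (hz _ (e j).2).2,
    fun j => (hz _ (e j).2).1.le, fun x => ?_⟩
  have hmz : ∀ T ∈ 𝒯, m T * ((m T)⁻¹ • z T) x = z T x := fun T hT => by
    simp [← mul_assoc, mul_inv_cancel₀ (hz T hT).1.ne']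
  rw [e.sum_comp fun T : 𝒯 => m T * ((m T)⁻¹ • z T) x]
  exact (sum_coe_sort 𝒯 _).trans (sum_congr rfl hmz)

/-- Decomposition Theorem (vanishing-entries form): if `y ∈ Las_t(K)`, `0 ≤ k ≤ t`, and
`y_I = 0` whenever `|I| ≤ 2t+2` and `|I ∩ S| > k`, then the truncation of `y` is a convex
combination of level-`(t-k)` Lasserre solutions integral on `S`. -/
theorem lasserre_decomposition_vanishing (n m t k : ℕ) (hk : k ≤ t)
    (A : Matrix (Fin m) (Fin n) ℝ) (b : Fin m → ℝ)
    (y : Finset (Fin n) → ℝ) (hy : IsLasserre (fun ℓ i => A ℓ i) b t y)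
    (S : Finset (Fin n))
    (hvanish : ∀ I : Finset (Fin n), I.card ≤ 2 * t + 2 → k < (I ∩ S).card → y I = 0) :
    ∃ (N : ℕ) (lam : Fin N → ℝ) (w : Fin N → Finset (Fin n) → ℝ),
      (∀ j, IsLasserre (fun ℓ i => A ℓ i) b (t - k) (w j)) ∧
      (∀ j, ∀ i ∈ S, w j {i} = 0 ∨ w j {i} = 1) ∧
      (∀ j, 0 ≤ lam j) ∧ (∑ j, lam j = 1) ∧
      (∀ J : Finset (Fin n), J.card ≤ 2 * (t - k) + 2 →
        y J = ∑ j, lam j * w j J) := by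
  -- `atomVec` reads entries of every size, so `y` is first extended by zero beyond `2t+2`
  set ŷ : Finset (Fin n) → ℝ := fun I => if (I ∩ S).card ≤ k then y I else 0
  have hŷvan : ∀ W, k < (W ∩ S).card → ŷ W = 0 := fun W hW => if_neg (not_le.2 hW)
  have hŷy : ∀ I : Finset (Fin n), I.card ≤ 2 * t + 2 → ŷ I = y I := fun I hI => by
    by_cases hIS : (I ∩ S).card ≤ k
    · exact if_pos hIS
    · rw [hvanish I hI (not_le.1 hIS)]
      exact if_neg hIS
  have hŷ : IsLasserreCone (fun ℓ i => A ℓ i) b (t - k + k) ŷ := by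
    rw [Nat.sub_add_cancel hk]
    exact (hy.congr hŷy).2
  have hcone : ∀ T ∈ S.powerset, IsLasserreCone (fun ℓ i => A ℓ i) b (t - k) (atomVec S T ŷ) :=
    fun T hT => hŷ.atomVec hŷvan (mem_powerset.1 hT)
  have hsum : ∀ J : Finset (Fin n), J.card ≤ 2 * (t - k) + 2 →
      ∑ T ∈ S.powerset with 0 < atomVec S T ŷ ∅, atomVec S T ŷ J = y J := by
    intro J hJ
    rw [sum_filter_of_ne fun T hT hne => ?_, sum_atomVec, hŷy J (by omega)]
    by_contra hpos
    exact hne ((hcone T hT).apply_eq_zero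
      ((not_lt.1 hpos).antisymm (hcone T hT).apply_empty_nonneg) hJ)
  obtain ⟨N, lam, w, hw, hlam, hlamw⟩ := exists_fin_sum_eq_sum_inv_smul
    (S.powerset.filter fun T => 0 < atomVec S T ŷ ∅) (fun T => atomVec S T ŷ)
    (fun T => atomVec S T ŷ ∅)
    (fun w => IsLasserre (fun ℓ i => A ℓ i) b (t - k) w ∧ ∀ i ∈ S, w {i} = 0 ∨ w {i} = 1)
    fun T hT => by
      obtain ⟨hTS, hpos⟩ := mem_filter.1 hT
      refine ⟨hpos, (hcone T hTS).isLasserre_inv_smul hpos, fun i hi => ?_⟩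
      simp only [Pi.smul_apply, smul_eq_mul, atomVec_singleton S T ŷ hi]
      split_ifs
      · exact Or.inr (inv_mul_cancel₀ hpos.ne')
      · exact Or.inl (mul_zero _)
  refine ⟨N, lam, w, fun j => (hw j).1, fun j => (hw j).2, hlam, ?_,
    fun J hJ => (hlamw J ▸ hsum J hJ).symm⟩
  calc ∑ j, lam j = ∑ j, lam j * w j ∅ := by simp [(hw _).1.1]
    _ = 1 := by rw [hlamw, hsum ∅ (by simp), hy.1]
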